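/- Let r, s, b₁, b₂ ∈ ℝ. Suppose there exists a constant C > 0 such that for all nonnegative measurable F, G : ℤ × ℝ → [0,∞): (∑_{n∈ℤ} ∫_ℝ n² ⟨n⟩^{2s} ⟨τ⟩^{−1} ((F ⋆ G)(n,τ))² dτ)^{1/2} ≤ C · N^{r,b₁}(F) · N^{r,b₂}(G). Then s ≤ 2r − 1 and s ≤ r, i.e. s ≤ min{2r − 1, r}. (Necessity of the index conditions in the bilinear estimate for the coupling term ∂_x(|u|²): the conclusion is obtained by testing on F(n,τ) = χ_{n=N} χ_{[−1,1]}(τ+n²), G(n,τ) = χ_{n=−N} χ_{[−1,1]}(τ+n²) and on F(n,τ) = χ_{n=0} χ_{[−1,1]}(τ+n²), G(n,τ) = χ_{n=N} χ_{[−1,1]}(τ+n²) with N ≫ 1.) -/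

import Mathlib

open MeasureTheory

noncomputable section

/-- Write `⟨x⟩ = 1 + |x|`. -/
def jap (x : ℝ) : ℝ := 1 + |x|

/-- Schrödinger Bourgain weighted norm
`N^{r,b}(F) = (∑_{n∈ℤ} ∫_ℝ ⟨n⟩^{2r} ⟨τ + n²⟩^{2b} F(n,τ)² dτ)^{1/2}`. -/
def Nnorm (r b : ℝ) (F : ℤ → ℝ → ℝ) : ℝ :=
  Real.sqrt (∑' n : ℤ, ∫ τ : ℝ,
    jap (n : ℝ) ^ (2 * r) * jap (τ + (n : ℝ) ^ 2) ^ (2 * b) * (F n τ) ^ 2)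

/-- Twisted convolution `(F ⋆ G)(n,τ) = ∑_{n₁∈ℤ} ∫_ℝ F(n₁,τ₁) G(n₁ − n, τ₁ − τ) dτ₁`. -/
def tconv (F G : ℤ → ℝ → ℝ) (n : ℤ) (τ : ℝ) : ℝ :=
  ∑' n₁ : ℤ, ∫ τ₁ : ℝ, F n₁ τ₁ * G (n₁ - n) (τ₁ - τ)

/-!
Test the estimate on `bump a`, the indicator of a unit neighbourhood of the point `(a, -a²)` of
the parabola `τ = -n²`. Then `N^{r,b}(bump a)² ≲ ⟨a⟩^{2r}`, while `bump a ⋆ bump b` lives at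
frequency `a - b` and is `≥ 1` on the window `|τ - (b² - a²)| ≤ 1`, where
`⟨τ⟩⁻¹ ≳ (2 + |b² - a²|)⁻¹`. For `(a, b) = (N, -N)` the window sits at `τ ≈ 0` and the estimate
forces `N^{2s+2} ≲ N^{4r}`; for `(a, b) = (0, N)` it sits at `τ ≈ N²`, the factor `N²` from `∂ₓ`
is cancelled by `⟨τ⟩⁻¹`, and the estimate forces `N^{2s} ≲ N^{2r}`.
-/

open Set Filter

lemma jap_pos (x : ℝ) : 0 < jap x := by
  unfold jap; positivity

lemma one_le_jap (x : ℝ) : 1 ≤ jap x :=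
  le_add_of_nonneg_right (abs_nonneg x)

lemma jap_zero : jap 0 = 1 := by
  rw [jap, abs_zero, add_zero]

lemma jap_neg (x : ℝ) : jap (-x) = jap x := by
  rw [jap, jap, abs_neg]

lemma continuous_jap : Continuous jap :=
  continuous_const.add continuous_abs

lemma tendsto_jap_natCast_atTop : Tendsto (fun N : ℕ => jap N) atTop atTop :=
  tendsto_atTop_add_const_left _ 1
    (tendsto_abs_atTop_atTop.comp tendsto_natCast_atTop_atTop)

lemma rpow_le_rpow_abs_of_one_le_of_le {x y : ℝ} (hx : 1 ≤ x) (hxy : x ≤ y) (p : ℝ) :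
    x ^ p ≤ y ^ |p| :=
  (Real.rpow_le_rpow_of_exponent_le hx (le_abs_self p)).trans
    (Real.rpow_le_rpow (by linarith) hxy (abs_nonneg p))

lemma jap_rpow_le_two_rpow_of_abs_le_one {x : ℝ} (hx : |x| ≤ 1) (p : ℝ) :
    jap x ^ p ≤ 2 ^ |p| :=
  rpow_le_rpow_abs_of_one_le_of_le (one_le_jap x) (by rw [jap]; linarith) p

lemma jap_rpow_le_two_rpow_mul_jap_two_mul_rpow (x p : ℝ) :
    jap x ^ p ≤ 2 ^ |p| * jap (2 * x) ^ p := by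
  have hx := jap_pos x
  have hratio_ge : 1 ≤ jap (2 * x) / jap x := by
    rw [one_le_div hx, jap, jap, abs_mul, abs_two]; linarith [abs_nonneg x]
  have hratio_le : jap (2 * x) / jap x ≤ 2 := by
    rw [div_le_iff₀ hx, jap, jap, abs_mul, abs_two]; linarith
  calc jap x ^ p = (jap (2 * x) / jap x) ^ (-p) * jap (2 * x) ^ p := by
        rw [Real.div_rpow (jap_pos _).le hx.le, Real.rpow_neg (jap_pos _).le,
          Real.rpow_neg hx.le]
        have := Real.rpow_pos_of_pos (jap_pos (2 * x)) p
        have := Real.rpow_pos_of_pos hx p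
        field_simp
    _ ≤ 2 ^ |p| * jap (2 * x) ^ p := by
        rw [← abs_neg p]
        exact mul_le_mul_of_nonneg_right (rpow_le_rpow_abs_of_one_le_of_le hratio_ge hratio_le _)
          (Real.rpow_nonneg (jap_pos _).le _)

lemma le_of_eventually_rpow_le_const_mul_rpow {ι : Type*} {l : Filter ι} [l.NeBot]
    {u : ι → ℝ} (hu : Tendsto u l atTop) {p q K : ℝ}
    (h : ∀ᶠ i in l, u i ^ p ≤ K * u i ^ q) : p ≤ q := by
  by_contra! hqp
  have hgrowth : Tendsto (fun i => u i ^ (p - q)) l atTop :=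
    (tendsto_rpow_atTop (sub_pos.2 hqp)).comp hu
  obtain ⟨i, hi, hKi, hpos⟩ :=
    (h.and ((hgrowth.eventually_gt_atTop K).and (hu.eventually_gt_atTop 0))).exists
  have hq : 0 < u i ^ q := Real.rpow_pos_of_pos hpos q
  rw [Real.rpow_sub hpos, lt_div_iff₀ hq] at hKi
  linarith

lemma integral_indicator_Icc_mul_indicator_Icc (p q ρ : ℝ) :
    ∫ x, (Icc (p - ρ) (p + ρ)).indicator (1 : ℝ → ℝ) x * (Icc (q - ρ) (q + ρ)).indicator 1 x
      = max (2 * ρ - |p - q|) 0 := by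
  simp_rw [← Pi.mul_apply (f := (Icc (p - ρ) (p + ρ)).indicator 1), ← inter_indicator_one,
    Icc_inter_Icc, integral_indicator_one measurableSet_Icc, Real.volume_real_Icc]
  rw [min_add_add_right, max_sub_sub_right, ← max_sub_min_eq_abs']
  ring_nf

/-- The length of the overlap of two intervals of length `2` whose centres are `|τ - m|` apart. -/
def tent (m τ : ℝ) : ℝ := max (2 - |τ - m|) 0

lemma continuous_tent (m : ℝ) : Continuous (tent m) := by
  unfold tent; fun_prop

lemma one_le_tent {m τ : ℝ} (h : τ ∈ Icc (m - 1) (m + 1)) : 1 ≤ tent m τ := by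
  have : |τ - m| ≤ 1 := abs_sub_le_iff.2 ⟨by linarith [h.2], by linarith [h.1]⟩
  exact le_max_of_le_left (by linarith)

lemma tent_eq_zero {m τ : ℝ} (h : τ ∉ Icc (m - 2) (m + 2)) : tent m τ = 0 := by
  have : 2 ≤ |τ - m| := by
    rw [mem_Icc, not_and_or, not_le, not_le] at h
    rcases h with h | h
    · exact le_abs.2 (Or.inr (by linarith))
    · exact le_abs.2 (Or.inl (by linarith))
  exact max_eq_right (by linarith)

lemma div_le_integral_jap_inv_mul_tent_sq (m : ℝ) :
    2 / (2 + |m|) ≤ ∫ τ, jap τ ^ (-1 : ℝ) * tent m τ ^ 2 := by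
  have hcont : Continuous fun τ => jap τ ^ (-1 : ℝ) * tent m τ ^ 2 :=
    (continuous_jap.rpow_const fun τ => Or.inl (jap_pos τ).ne').mul
      ((continuous_tent m).pow 2)
  have hint : Integrable fun τ => jap τ ^ (-1 : ℝ) * tent m τ ^ 2 :=
    hcont.integrable_of_hasCompactSupport <|
      HasCompactSupport.intro (isCompact_Icc (a := m - 2) (b := m + 2))
        fun τ hτ => by simp [tent_eq_zero hτ]
  have hlow : ∀ τ ∈ Icc (m - 1) (m + 1), (2 + |m|)⁻¹ ≤ jap τ ^ (-1 : ℝ) * tent m τ ^ 2 := by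
    intro τ hτ
    have hjap : jap τ ≤ 2 + |m| := by
      have : |τ| ≤ |m| + 1 :=
        abs_le.2 ⟨by linarith [neg_abs_le m, hτ.1], by linarith [le_abs_self m, hτ.2]⟩
      rw [jap]; linarith
    rw [Real.rpow_neg_one]
    calc (2 + |m|)⁻¹ ≤ (jap τ)⁻¹ := inv_anti₀ (jap_pos τ) hjap
      _ ≤ (jap τ)⁻¹ * tent m τ ^ 2 :=
        le_mul_of_one_le_right (inv_nonneg.2 (jap_pos τ).le) (one_le_pow₀ (one_le_tent hτ))
  calc 2 / (2 + |m|) = (2 + |m|)⁻¹ * volume.real (Icc (m - 1) (m + 1)) := by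
        rw [Real.volume_real_Icc, div_eq_inv_mul]; norm_num
    _ ≤ ∫ τ in Icc (m - 1) (m + 1), jap τ ^ (-1 : ℝ) * tent m τ ^ 2 :=
        setIntegral_ge_of_const_le_real measurableSet_Icc (by simp) hlow hint.integrableOn
    _ ≤ ∫ τ, jap τ ^ (-1 : ℝ) * tent m τ ^ 2 :=
        setIntegral_le_integral hint (Eventually.of_forall fun τ =>
          mul_nonneg (Real.rpow_nonneg (jap_pos τ).le _) (sq_nonneg _))

/-- The paper's test function `χ_{n=a} χ_{[-1,1]}(τ + n²)`. -/
def bump (a : ℤ) : ℤ → ℝ → ℝ :=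
  Function.curry (({a} ×ˢ Icc (-(a : ℝ) ^ 2 - 1) (-(a : ℝ) ^ 2 + 1)).indicator 1)

lemma bump_apply (a n : ℤ) (τ : ℝ) :
    bump a n τ = ({a} : Set ℤ).indicator 1 n
      * (Icc (-(a : ℝ) ^ 2 - 1) (-(a : ℝ) ^ 2 + 1)).indicator 1 τ :=
  indicator_prod_one

lemma bump_nonneg (a n : ℤ) (τ : ℝ) : 0 ≤ bump a n τ :=
  indicator_nonneg (fun _ _ => zero_le_one) _

lemma measurable_uncurry_bump (a : ℤ) : Measurable (Function.uncurry (bump a)) := by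
  rw [bump, Function.uncurry_curry]
  exact measurable_one.indicator ((measurableSet_singleton a).prod measurableSet_Icc)

lemma bump_of_ne {a n : ℤ} (h : n ≠ a) (τ : ℝ) : bump a n τ = 0 := by
  simp [bump_apply, h]

lemma Nnorm_bump_sq_le (r b : ℝ) (a : ℤ) :
    Nnorm r b (bump a) ^ 2 ≤ 2 * 2 ^ |2 * b| * jap a ^ (2 * r) := by
  set I := Icc (-(a : ℝ) ^ 2 - 1) (-(a : ℝ) ^ 2 + 1)
  set f := fun τ => jap a ^ (2 * r) * jap (τ + (a : ℝ) ^ 2) ^ (2 * b) * bump a a τ ^ 2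
  have hf_nonneg : ∀ τ, 0 ≤ f τ := fun τ => by
    have := (jap_pos a).le; have := (jap_pos (τ + (a : ℝ) ^ 2)).le; positivity
  have hf_le : ∀ τ, f τ ≤ 2 ^ |2 * b| * jap a ^ (2 * r) * I.indicator 1 τ := by
    intro τ
    simp only [f]
    by_cases hτ : τ ∈ I
    · have hjap := jap_rpow_le_two_rpow_of_abs_le_one
        (abs_le.2 ⟨by linarith [hτ.1], by linarith [hτ.2]⟩ : |τ + (a : ℝ) ^ 2| ≤ 1) (2 * b)
      rw [bump_apply, indicator_of_mem hτ, indicator_of_mem (mem_singleton a)]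
      simp only [Pi.one_apply, mul_one, one_pow]
      rw [mul_comm]
      exact mul_le_mul_of_nonneg_right hjap (Real.rpow_nonneg (jap_pos a).le _)
    · rw [bump_apply, indicator_of_notMem hτ]
      simp
  have hsum : Nnorm r b (bump a) ^ 2 = ∫ τ, f τ := by
    rw [Nnorm, tsum_eq_single a fun n hn => by simp [bump_of_ne hn]]
    exact Real.sq_sqrt (integral_nonneg hf_nonneg)
  calc Nnorm r b (bump a) ^ 2 ≤ ∫ τ, 2 ^ |2 * b| * jap a ^ (2 * r) * I.indicator 1 τ := by
        rw [hsum]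
        refine integral_mono_of_nonneg (Eventually.of_forall hf_nonneg) ?_
          (Eventually.of_forall hf_le)
        exact (integrable_indicator_iff measurableSet_Icc).2
          (integrableOn_const (by simp)) |>.const_mul _
    _ = 2 * 2 ^ |2 * b| * jap a ^ (2 * r) := by
        rw [integral_const_mul, integral_indicator_one measurableSet_Icc, Real.volume_real_Icc]
        norm_num
        ring

lemma tconv_bump_bump (a b n : ℤ) (τ : ℝ) :
    tconv (bump a) (bump b) n τ
      = ({a - b} : Set ℤ).indicator 1 n * tent ((b : ℝ) ^ 2 - (a : ℝ) ^ 2) τ := by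
  rw [tconv, tsum_eq_single a fun n₁ hn₁ => by simp [bump_of_ne hn₁]]
  by_cases hn : n = a - b
  · subst hn
    have hshift : ∀ τ₁, (Icc (-(b : ℝ) ^ 2 - 1) (-(b : ℝ) ^ 2 + 1)).indicator (1 : ℝ → ℝ) (τ₁ - τ)
        = (Icc ((τ - (b : ℝ) ^ 2) - 1) ((τ - (b : ℝ) ^ 2) + 1)).indicator 1 τ₁ := fun τ₁ => by
      rw [← indicator_comp_right (fun x => x - τ), preimage_sub_const_Icc, Pi.one_comp]
      ring_nf
    simp only [bump_apply, sub_sub_cancel, indicator_of_mem (mem_singleton _), Pi.one_apply,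
      one_mul, hshift]
    rw [integral_indicator_Icc_mul_indicator_Icc, tent, abs_sub_comm]
    ring_nf
  · have hb : a - n ≠ b := by omega
    simp [bump_of_ne hb, hn]

lemma le_tsum_integral_tconv_bump_bump (s : ℝ) (a b : ℤ) :
    ((a : ℝ) - b) ^ 2 * jap ((a : ℝ) - b) ^ (2 * s) * (2 / (2 + |(b : ℝ) ^ 2 - (a : ℝ) ^ 2|))
      ≤ ∑' n : ℤ, ∫ τ : ℝ, (n : ℝ) ^ 2 * jap n ^ (2 * s) * jap τ ^ (-1 : ℝ)
          * tconv (bump a) (bump b) n τ ^ 2 := by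
  rw [tsum_eq_single (a - b) fun n hn => by simp [tconv_bump_bump, hn]]
  simp only [tconv_bump_bump, indicator_of_mem (mem_singleton _), Pi.one_apply, one_mul,
    mul_assoc, integral_const_mul, Int.cast_sub]
  gcongr
  · have := (jap_pos ((a : ℝ) - b)).le; positivity
  · exact div_le_integral_jap_inv_mul_tent_sq _

def BilinearEstimate (r s b₁ b₂ C : ℝ) : Prop :=
  ∀ F G : ℤ → ℝ → ℝ,
    (∀ n τ, 0 ≤ F n τ) → (∀ n τ, 0 ≤ G n τ) →
    Measurable (Function.uncurry F) → Measurable (Function.uncurry G) →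
    Real.sqrt (∑' n : ℤ, ∫ τ : ℝ,
        (n : ℝ) ^ 2 * jap (n : ℝ) ^ (2 * s) * jap τ ^ (-1 : ℝ) * (tconv F G n τ) ^ 2)
      ≤ C * Nnorm r b₁ F * Nnorm r b₂ G

namespace BilinearEstimate

variable {r s b₁ b₂ C : ℝ}

lemma bump_bump_le (h : BilinearEstimate r s b₁ b₂ C) (a b : ℤ) :
    ((a : ℝ) - b) ^ 2 * jap ((a : ℝ) - b) ^ (2 * s) * (2 / (2 + |(b : ℝ) ^ 2 - (a : ℝ) ^ 2|))
      ≤ C ^ 2 * (2 * 2 ^ |2 * b₁| * jap a ^ (2 * r)) * (2 * 2 ^ |2 * b₂| * jap b ^ (2 * r)) := by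
  have hest := h (bump a) (bump b) (bump_nonneg a) (bump_nonneg b)
    (measurable_uncurry_bump a) (measurable_uncurry_bump b)
  calc _ ≤ _ := le_tsum_integral_tconv_bump_bump s a b
    _ ≤ (C * Nnorm r b₁ (bump a) * Nnorm r b₂ (bump b)) ^ 2 := (Real.sqrt_le_iff.1 hest).2
    _ = C ^ 2 * Nnorm r b₁ (bump a) ^ 2 * Nnorm r b₂ (bump b) ^ 2 := by ring
    _ ≤ _ := by
        have := Real.rpow_nonneg (jap_pos a).le (2 * r)
        gcongr
        · exact Nnorm_bump_sq_le r b₁ a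
        · exact Nnorm_bump_sq_le r b₂ b

lemma le_two_mul_sub_one (h : BilinearEstimate r s b₁ b₂ C) : s ≤ 2 * r - 1 := by
  suffices 2 * s + 2 ≤ 2 * r + 2 * r by linarith
  refine le_of_eventually_rpow_le_const_mul_rpow tendsto_jap_natCast_atTop
    (K := 2 ^ |2 * s| * (C ^ 2 * (2 * 2 ^ |2 * b₁|) * (2 * 2 ^ |2 * b₂|))) ?_
  filter_upwards [eventually_ge_atTop 1] with N hN
  have hbound := h.bump_bump_le N (-N)
  push_cast at hbound
  rw [sub_neg_eq_add, ← two_mul, jap_neg, neg_sq, sub_self, abs_zero, add_zero,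
    div_self two_ne_zero, mul_one] at hbound
  have hN : jap N ≤ 2 * N := by
    rw [jap, abs_of_nonneg (Nat.cast_nonneg N)]; linarith [(Nat.one_le_cast (α := ℝ)).2 hN]
  rw [Real.rpow_add (jap_pos _), Real.rpow_add (jap_pos _), Real.rpow_two]
  calc jap N ^ (2 * s) * jap N ^ 2 ≤ 2 ^ |2 * s| * jap (2 * N) ^ (2 * s) * (2 * N) ^ 2 :=
        mul_le_mul (jap_rpow_le_two_rpow_mul_jap_two_mul_rpow _ _)
          (pow_le_pow_left₀ (jap_pos _).le hN 2) (sq_nonneg _)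
          (mul_nonneg (by positivity) (Real.rpow_nonneg (jap_pos _).le _))
    _ = 2 ^ |2 * s| * ((2 * N) ^ 2 * jap (2 * N) ^ (2 * s)) := by ring
    _ ≤ _ := mul_le_mul_of_nonneg_left hbound (by positivity)
    _ = _ := by ring

lemma le (h : BilinearEstimate r s b₁ b₂ C) : s ≤ r := by
  suffices 2 * s ≤ 2 * r by linarith
  refine le_of_eventually_rpow_le_const_mul_rpow tendsto_jap_natCast_atTop
    (K := 3 / 2 * (C ^ 2 * (2 * 2 ^ |2 * b₁|) * (2 * 2 ^ |2 * b₂|))) ?_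
  filter_upwards [eventually_ge_atTop 1] with N hN
  have hbound := h.bump_bump_le 0 N
  push_cast at hbound
  rw [zero_sub, neg_sq, jap_neg, zero_pow two_ne_zero, sub_zero, abs_of_nonneg (sq_nonneg _),
    jap_zero, Real.one_rpow, mul_one] at hbound
  have hN : (1 : ℝ) ≤ N := Nat.one_le_cast.2 hN
  have hfactor : 1 ≤ 3 / 2 * ((N : ℝ) ^ 2 * (2 / (2 + (N : ℝ) ^ 2))) := by
    field_simp; nlinarith
  calc jap N ^ (2 * s) ≤ 3 / 2 * ((N : ℝ) ^ 2 * (2 / (2 + (N : ℝ) ^ 2))) * jap N ^ (2 * s) :=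
        le_mul_of_one_le_left (Real.rpow_nonneg (jap_pos _).le _) hfactor
    _ = 3 / 2 * ((N : ℝ) ^ 2 * jap N ^ (2 * s) * (2 / (2 + (N : ℝ) ^ 2))) := by ring
    _ ≤ _ := mul_le_mul_of_nonneg_left hbound (by positivity)
    _ = _ := by ring

end BilinearEstimate

/-- Necessity of the index condition `s ≤ min{2r − 1, r}` in the bilinear estimate for the
coupling term `∂ₓ(|u|²)`. -/
theorem bilinear_estimate_dx_necessity (r s b₁ b₂ : ℝ)
    (H : ∃ C > 0, ∀ F G : ℤ → ℝ → ℝ,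
      (∀ n τ, 0 ≤ F n τ) → (∀ n τ, 0 ≤ G n τ) →
      Measurable (Function.uncurry F) → Measurable (Function.uncurry G) →
      Real.sqrt (∑' n : ℤ, ∫ τ : ℝ,
          (n : ℝ) ^ 2 * jap (n : ℝ) ^ (2 * s) * jap τ ^ (-1 : ℝ) * (tconv F G n τ) ^ 2)
        ≤ C * Nnorm r b₁ F * Nnorm r b₂ G) :
    s ≤ 2 * r - 1 ∧ s ≤ r := by
  obtain ⟨C, -, hest⟩ := H
  have h : BilinearEstimate r s b₁ b₂ C := hest
  exact ⟨h.le_two_mul_sub_one, h.le⟩
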